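/- Under the top agent property and limited complementarity, the outcome of the ordered match algorithm is a strongly stable outcome of the network formation game: there is no coalition of agents that can form a new set of edges among themselves (while keeping or dropping their existing edges with outside agents arbitrarily) such that all coalition members weakly prefer the new graph and at least one strictly prefers it. -/

import Mathlib

open Finset

/-- Closed neighborhood of `k` in the undirected graph with edge set `E`. -/
def nbhd {N : ℕ} (E : Finset (Fin N × Fin N)) (k : Fin N) : Finset (Fin N) :=
  insert k (Finset.univ.filter (fun m => (k, m) ∈ E ∨ (m, k) ∈ E))

/-- Strict preference of agent `k` derived from the weak preference `W` over coalitions. -/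
def SPref {N : ℕ} (W : Fin N → Finset (Fin N) → Finset (Fin N) → Prop)
    (k : Fin N) (S T : Finset (Fin N)) : Prop :=
  W k S T ∧ ¬ W k T S

/-- Each agent's weak preference over coalitions containing it is complete and transitive. -/
def TotalPreorderOn {N : ℕ}
    (W : Fin N → Finset (Fin N) → Finset (Fin N) → Prop) : Prop :=
  ∀ k : Fin N,
    (∀ S T : Finset (Fin N), k ∈ S → k ∈ T → W k S T ∨ W k T S) ∧
    (∀ S T R : Finset (Fin N), W k S T → W k T R → W k S R)

/-- Top agent property with agents labeled in decreasing order of the common preference: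
every agent strictly prefers the lower-labeled of two other agents. -/
def TopAgentLabeled {N : ℕ}
    (W : Fin N → Finset (Fin N) → Finset (Fin N) → Prop) : Prop :=
  ∀ k i j : Fin N, i ≠ k → j ≠ k → i < j →
    ∀ S : Finset (Fin N), k ∈ S → i ∉ S → j ∉ S →
      SPref W k (insert i S) (insert j S)

/-- Limited complementarity: if adding agent `i` strictly hurts `k`, then adding any nonempty
subset of agents labeled (i.e. ranked) weakly below `i` strictly hurts `k`. -/
def LimitedComp {N : ℕ}
    (W : Fin N → Finset (Fin N) → Finset (Fin N) → Prop) : Prop :=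
  ∀ (k : Fin N) (S : Finset (Fin N)) (i : Fin N), k ∈ S →
    SPref W k S (insert i S) →
    ∀ S' : Finset (Fin N), S' ⊆ Finset.univ.filter (fun j => i ≤ j) → S'.Nonempty →
      SPref W k S (S ∪ S')

open scoped Classical in
/-- One proposal step of the ordered match algorithm on edge set `E` for the pair `p = (n, l)`:
the edge is added iff both agents weakly prefer adding the other given current neighborhoods. -/
noncomputable def omStep {N : ℕ}
    (W : Fin N → Finset (Fin N) → Finset (Fin N) → Prop)
    (E : Finset (Fin N × Fin N)) (p : Fin N × Fin N) : Finset (Fin N × Fin N) :=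
  if W p.1 (insert p.2 (nbhd E p.1)) (nbhd E p.1) ∧
     W p.2 (insert p.1 (nbhd E p.2)) (nbhd E p.2)
  then insert p E else E

/-- The list of proposal pairs `(n, l)` with `n < l`, in the order visited by ordered match. -/
def pairList (N : ℕ) : List (Fin N × Fin N) :=
  (List.finRange N).flatMap (fun n =>
    ((List.finRange N).filter (fun l => n < l)).map (fun l => (n, l)))

/-- The ordered match algorithm: fold the proposal steps over all pairs in order. -/
noncomputable def orderedMatch {N : ℕ}
    (W : Fin N → Finset (Fin N) → Finset (Fin N) → Prop) : Finset (Fin N × Fin N) :=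
  (pairList N).foldl (omStep W) ∅

/-- A coalition `C` with deviating graph `E'` blocks the graph `E`: new edges are only within
the coalition, edges between non-members are untouched, all members are weakly better off and
some member is strictly better off. -/
def Blocks {N : ℕ} (W : Fin N → Finset (Fin N) → Finset (Fin N) → Prop)
    (E : Finset (Fin N × Fin N)) (C : Finset (Fin N))
    (E' : Finset (Fin N × Fin N)) : Prop :=
  (∀ e ∈ E', e ∉ E → e.1 ∈ C ∧ e.2 ∈ C) ∧
  (∀ e : Fin N × Fin N, e.1 ∉ C → e.2 ∉ C → (e ∈ E ↔ e ∈ E')) ∧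
  (∀ m ∈ C, W m (nbhd E' m) (nbhd E m)) ∧
  (∃ m ∈ C, SPref W m (nbhd E' m) (nbhd E m))

/-- Strong stability: no nonempty coalition has a blocking deviation. -/
def StronglyStable {N : ℕ} (W : Fin N → Finset (Fin N) → Finset (Fin N) → Prop)
    (E : Finset (Fin N × Fin N)) : Prop :=
  ¬ ∃ (C : Finset (Fin N)) (E' : Finset (Fin N × Fin N)), C.Nonempty ∧ Blocks W E C E'

/-!
Ordered match builds every agent's partner set greedily: each partner was accepted on top of the
better-ranked partners already held, and by the top agent property such a set is weakly preferred
to each of its subsets. Suppose a coalition blocks, and let `{x, y}` be its new link that ordered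
match processed first. One of the two, `d`, rejected the other, `o`, while holding `Q`. Limited
complementarity makes `Q` strictly better for `d` than `Q` plus any agents ranked at or below `o`,
and swapping such agents for missing members of `Q` (top agent property) extends this to the
neighbourhood `d` gets in the deviation, which only adds partners ranked at or below `o`. As `d`'s
final neighbourhood is weakly better than `Q`, `d` loses, a contradiction. So the deviation only
deletes links, and greedy optimality shows that no member gains.
-/

section OrderedMatch

variable {N : ℕ}

def partners (E : Finset (Fin N × Fin N)) (k : Fin N) : Finset (Fin N) :=
  univ.filter (fun m => (k, m) ∈ E ∨ (m, k) ∈ E)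

lemma nbhd_eq_insert_partners (E : Finset (Fin N × Fin N)) (k : Fin N) :
    nbhd E k = insert k (partners E k) := rfl

lemma mem_partners {E : Finset (Fin N × Fin N)} {k m : Fin N} :
    m ∈ partners E k ↔ (k, m) ∈ E ∨ (m, k) ∈ E := by
  simp [partners]

lemma mem_partners_comm {E : Finset (Fin N × Fin N)} {k m : Fin N} :
    m ∈ partners E k ↔ k ∈ partners E m := by
  simp only [mem_partners, or_comm]

/-- The neighbourhood of `k` restricted to partners labelled below `t`: what `k` holds when the
ordered match algorithm reaches the pair `{k, t}`. -/
def nbhdBelow (E : Finset (Fin N × Fin N)) (k t : Fin N) : Finset (Fin N) :=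
  insert k ((partners E k).filter (· < t))

section Preferences

variable {W : Fin N → Finset (Fin N) → Finset (Fin N) → Prop} {k : Fin N}
  {S T R : Finset (Fin N)}

lemma TotalPreorderOn.refl (hW : TotalPreorderOn W) (hk : k ∈ S) : W k S S :=
  ((hW k).1 S S hk hk).elim id id

lemma TotalPreorderOn.trans (hW : TotalPreorderOn W) (hST : W k S T) (hTR : W k T R) :
    W k S R :=
  (hW k).2 S T R hST hTR

lemma TotalPreorderOn.sPref_of_weak_of_sPref (hW : TotalPreorderOn W) (hST : W k S T)
    (hTR : SPref W k T R) : SPref W k S R :=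
  ⟨hW.trans hST hTR.1, fun hRS => hTR.2 (hW.trans hRS hST)⟩

lemma TotalPreorderOn.sPref_of_sPref_of_weak (hW : TotalPreorderOn W) (hST : SPref W k S T)
    (hTR : W k T R) : SPref W k S R :=
  ⟨hW.trans hST.1 hTR, fun hRS => hST.2 (hW.trans hTR hRS)⟩

def AcceptedInOrder (W : Fin N → Finset (Fin N) → Finset (Fin N) → Prop) (k : Fin N)
    (S : Finset (Fin N)) : Prop :=
  ∀ p ∈ S, W k (insert p (insert k (S.filter (· < p)))) (insert k (S.filter (· < p)))

lemma AcceptedInOrder.filter_lt (hS : AcceptedInOrder W k S) (t : Fin N) :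
    AcceptedInOrder W k (S.filter (· < t)) := by
  intro p hp
  have hpt : p < t := (mem_filter.mp hp).2
  have hsame : (S.filter (· < t)).filter (· < p) = S.filter (· < p) := by
    rw [filter_filter]
    exact filter_congr fun c _ => ⟨fun h => h.2, fun h => ⟨h.trans hpt, h⟩⟩
  rw [hsame]
  exact hS p (mem_filter.mp hp).1

theorem AcceptedInOrder.weak_of_subset (hW : TotalPreorderOn W) (hTop : TopAgentLabeled W)
    (hkS : k ∉ S) (hS : AcceptedInOrder W k S) :
    ∀ B ⊆ insert k S, k ∈ B → W k (insert k S) B := by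
  induction S using Finset.induction_on_max with
  | empty =>
    intro B hB hkB
    rw [Subset.antisymm hB (singleton_subset_iff.mpr hkB)]
    exact hW.refl (mem_singleton_self k)
  | insert a s hlt ih =>
    have hka : a ≠ k := fun h => hkS (h ▸ mem_insert_self a s)
    have hks : k ∉ s := fun h => hkS (mem_insert_of_mem h)
    have hs : AcceptedInOrder W k s := by
      have := hS.filter_lt a
      rwa [filter_insert, if_neg (lt_irrefl a), filter_true_of_mem hlt] at this
    have ih := ih hks hs
    have hacc : W k (insert k (insert a s)) (insert k s) := by
      have := hS a (mem_insert_self a s)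
      rwa [filter_insert, if_neg (lt_irrefl a), filter_true_of_mem hlt, insert_comm] at this
    intro B hB hkB
    by_cases haB : a ∈ B
    · set B' := B.erase a
      have hB' : B' ⊆ insert k s := subset_insert_iff.mp (insert_comm k a s ▸ hB)
      have hkB' : k ∈ B' := mem_erase.mpr ⟨hka.symm, hkB⟩
      by_cases hfull : insert k s ⊆ B'
      · rw [← insert_erase haB]
        change W k _ (insert a B')
        rw [Subset.antisymm hB' hfull, insert_comm]
        exact hW.refl (by simp)
      obtain ⟨c, hc, hcB'⟩ := not_subset.mp hfull
      have hck : c ≠ k := fun h => hcB' (h ▸ hkB')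
      have hcs : c ∈ s := (mem_insert.mp hc).resolve_left hck
      have hswap := hTop k c a hck hka (hlt c hcs) B' hkB' hcB' (notMem_erase a B)
      rw [insert_erase haB] at hswap
      have hc' : insert c B' ⊆ insert k s := insert_subset_iff.mpr ⟨hc, hB'⟩
      exact hW.trans hacc (hW.trans (ih _ hc' (mem_insert_of_mem hkB')) hswap.1)
    · exact hW.trans hacc
        (ih B ((subset_insert_iff_of_notMem haB).mp (insert_comm k a s ▸ hB)) hkB)

theorem sPref_of_rejected (hW : TotalPreorderOn W) (hTop : TopAgentLabeled W)
    (hLC : LimitedComp W) {o : Fin N} {Q : Finset (Fin N)} (hkQ : k ∈ Q)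
    (hQo : ∀ c ∈ Q, c ≠ k → c < o) (hQ : ∀ B ⊆ Q, k ∈ B → W k Q B)
    (hrej : SPref W k Q (insert o Q)) {B : Finset (Fin N)} (hkB : k ∈ B)
    (hBlow : ∀ c ∈ B, c < o → c ∈ Q) (hBQ : ¬ B ⊆ Q) : SPref W k Q B := by
  induction hn : (Q \ B).card using Nat.strong_induction_on generalizing B with
  | _ n ih =>
  by_cases hQB : Q ⊆ B
  · have hhigh : B \ Q ⊆ univ.filter (o ≤ ·) := fun c hc =>
      mem_filter.mpr ⟨mem_univ c, not_lt.mp fun h => (mem_sdiff.mp hc).2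
        (hBlow c (mem_sdiff.mp hc).1 h)⟩
    have hne : (B \ Q).Nonempty := by
      obtain ⟨c, hcB, hcQ⟩ := not_subset.mp hBQ
      exact ⟨c, mem_sdiff.mpr ⟨hcB, hcQ⟩⟩
    have := hLC k Q o hkQ hrej (B \ Q) hhigh hne
    rwa [union_sdiff_of_subset hQB] at this
  -- swap a member `m` of `B` outside `Q` for a better-ranked member `c` of `Q` missing from `B`
  obtain ⟨c, hcQ, hcB⟩ := not_subset.mp hQB
  obtain ⟨m, hmB, hmQ⟩ := not_subset.mp hBQ
  have hck : c ≠ k := fun h => hcB (h ▸ hkB)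
  have hmk : m ≠ k := fun h => hmQ (h ▸ hkQ)
  have hcm : c < m := (hQo c hcQ hck).trans_le (not_lt.mp fun h => hmQ (hBlow m hmB h))
  set B' := insert c (B.erase m)
  have hkB' : k ∈ B' := mem_insert_of_mem (mem_erase.mpr ⟨hmk.symm, hkB⟩)
  have hswap : SPref W k B' B := by
    have := hTop k c m hck hmk hcm (B.erase m) (mem_erase.mpr ⟨hmk.symm, hkB⟩)
      (fun h => hcB (mem_of_mem_erase h)) (notMem_erase m B)
    rwa [insert_erase hmB] at this
  by_cases hB'Q : B' ⊆ Q
  · exact hW.sPref_of_weak_of_sPref (hQ B' hB'Q hkB') hswap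
  have hlt : (Q \ B').card < n := by
    rw [← hn]
    refine card_lt_card ((ssubset_iff_of_subset ?_).mpr ⟨c, mem_sdiff.mpr ⟨hcQ, hcB⟩, ?_⟩)
    · intro x hx
      obtain ⟨hxQ, hxB'⟩ := mem_sdiff.mp hx
      refine mem_sdiff.mpr ⟨hxQ, fun hxB => hxB' (mem_insert_of_mem (mem_erase.mpr ⟨?_, hxB⟩))⟩
      rintro rfl
      exact hmQ hxQ
    · simp [B']
  have hB'low : ∀ c' ∈ B', c' < o → c' ∈ Q := by
    intro c' hc' hc'o
    rcases mem_insert.mp hc' with rfl | hc'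
    exacts [hcQ, hBlow c' (mem_of_mem_erase hc') hc'o]
  exact hW.sPref_of_sPref_of_weak (ih _ hlt hkB' hB'low hB'Q rfl) hswap.1

end Preferences

section Algorithm

lemma mem_pairList {p : Fin N × Fin N} : p ∈ pairList N ↔ p.1 < p.2 := by
  simp [pairList, Prod.ext_iff]

lemma pairList_sorted : (pairList N).Pairwise (fun p q => toLex p < toLex q) := by
  rw [pairList, List.pairwise_flatMap]
  constructor
  · intro n _
    rw [List.pairwise_map]
    refine ((List.pairwise_lt_finRange N).sublist List.filter_sublist).imp ?_
    exact fun h => Prod.Lex.toLex_lt_toLex.mpr (Or.inr ⟨rfl, h⟩)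
  · refine (List.pairwise_lt_finRange N).imp fun h x hx y hy => ?_
    obtain ⟨_, -, rfl⟩ := List.mem_map.mp hx
    obtain ⟨_, -, rfl⟩ := List.mem_map.mp hy
    exact Prod.Lex.toLex_lt_toLex.mpr (Or.inl h)

variable (W : Fin N → Finset (Fin N) → Finset (Fin N) → Prop)

lemma mem_omStep_self {E : Finset (Fin N × Fin N)} {p : Fin N × Fin N} (hp : p ∉ E) :
    p ∈ omStep W E p ↔
      W p.1 (insert p.2 (nbhd E p.1)) (nbhd E p.1) ∧ W p.2 (insert p.1 (nbhd E p.2)) (nbhd E p.2) := by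
  unfold omStep
  split_ifs with h <;> simp [h, hp]

lemma omStep_subset (E : Finset (Fin N × Fin N)) (p : Fin N × Fin N) :
    omStep W E p ⊆ insert p E := by
  unfold omStep
  split_ifs
  exacts [Subset.refl _, subset_insert _ _]

lemma subset_foldl_omStep (E : Finset (Fin N × Fin N)) (L : List (Fin N × Fin N)) :
    E ⊆ L.foldl (omStep W) E := by
  induction L generalizing E with
  | nil => exact Subset.refl _
  | cons p L ih =>
    refine Subset.trans ?_ (ih _)
    unfold omStep
    split_ifs
    exacts [subset_insert _ _, Subset.refl _]

lemma mem_of_mem_foldl_omStep {E : Finset (Fin N × Fin N)} {L : List (Fin N × Fin N)}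
    {e : Fin N × Fin N} (he : e ∈ L.foldl (omStep W) E) : e ∈ E ∨ e ∈ L := by
  induction L generalizing E with
  | nil => exact Or.inl he
  | cons p L ih =>
    rcases ih he with h | h
    · rcases mem_insert.mp (omStep_subset W E p h) with rfl | h
      exacts [Or.inr List.mem_cons_self, Or.inl h]
    · exact Or.inr (List.mem_cons_of_mem p h)

lemma fst_lt_snd_of_mem_orderedMatch {e : Fin N × Fin N} (he : e ∈ orderedMatch W) :
    e.1 < e.2 := by
  rcases mem_of_mem_foldl_omStep W he with h | h
  · simp at h
  · exact mem_pairList.mp h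

lemma partners_filter_lt_fst {E : Finset (Fin N × Fin N)} (hE : ∀ e ∈ E, e.1 < e.2)
    {a b : Fin N} (hab : a < b) :
    partners (E.filter (fun e => toLex e < toLex (a, b))) a = (partners E a).filter (· < b) := by
  ext c
  simp only [mem_filter, mem_partners, Prod.Lex.toLex_lt_toLex]
  have := hE (a, c)
  have := hE (c, a)
  grind

lemma partners_filter_lt_snd {E : Finset (Fin N × Fin N)} (hE : ∀ e ∈ E, e.1 < e.2)
    {a b : Fin N} (hab : a < b) :
    partners (E.filter (fun e => toLex e < toLex (a, b))) b = (partners E b).filter (· < a) := by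
  ext c
  simp only [mem_filter, mem_partners, Prod.Lex.toLex_lt_toLex]
  have := hE (b, c)
  have := hE (c, b)
  grind

theorem mem_orderedMatch_iff {a b : Fin N} (hab : a < b) :
    (a, b) ∈ orderedMatch W ↔
      W a (insert b (nbhdBelow (orderedMatch W) a b)) (nbhdBelow (orderedMatch W) a b) ∧
      W b (insert a (nbhdBelow (orderedMatch W) b a)) (nbhdBelow (orderedMatch W) b a) := by
  obtain ⟨L₁, L₂, hL⟩ := List.append_of_mem (mem_pairList.mpr hab : (a, b) ∈ pairList N)
  have hsorted := pairList_sorted (N := N)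
  rw [hL, List.pairwise_append, List.pairwise_cons] at hsorted
  obtain ⟨-, ⟨hafter, -⟩, hbefore⟩ := hsorted
  set E := orderedMatch W
  set E₀ := L₁.foldl (omStep W) ∅
  have hE : E = L₂.foldl (omStep W) (omStep W E₀ (a, b)) := by
    simp [E, E₀, orderedMatch, hL]
  have hE₀ : E₀ = E.filter (fun e => toLex e < toLex (a, b)) := by
    ext e
    rw [mem_filter]
    constructor
    · intro he
      refine ⟨hE ▸ subset_foldl_omStep W _ L₂ (subset_foldl_omStep W E₀ [(a, b)] ?_), ?_⟩
      · simpa using he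
      · rcases mem_of_mem_foldl_omStep W he with h | h
        exacts [absurd h (notMem_empty e), hbefore e h _ List.mem_cons_self]
    · rintro ⟨heE, hlt⟩
      rw [hE] at heE
      rcases mem_of_mem_foldl_omStep W heE with h | h
      · rcases mem_insert.mp (omStep_subset W E₀ (a, b) h) with rfl | h
        exacts [absurd hlt (lt_irrefl _), h]
      · exact absurd hlt (hafter e h).asymm
  have hmem : (a, b) ∈ E ↔ (a, b) ∈ omStep W E₀ (a, b) := by
    refine ⟨fun h => ?_, fun h => hE ▸ subset_foldl_omStep W _ L₂ h⟩
    rw [hE] at h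
    rcases mem_of_mem_foldl_omStep W h with h | h
    exacts [h, absurd (hafter _ h) (lt_irrefl _)]
  have hfst : ∀ e ∈ E, e.1 < e.2 := fun e => fst_lt_snd_of_mem_orderedMatch W
  rw [hmem, mem_omStep_self W (by simp [hE₀]), nbhd_eq_insert_partners,
    nbhd_eq_insert_partners, hE₀, partners_filter_lt_fst hfst hab,
    partners_filter_lt_snd hfst hab]
  rfl

end Algorithm

section Stability

variable {W : Fin N → Finset (Fin N) → Finset (Fin N) → Prop}

lemma acceptedInOrder_partners_orderedMatch (d : Fin N) :
    AcceptedInOrder W d (partners (orderedMatch W) d) := by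
  intro p hp
  rcases mem_partners.mp hp with h | h
  · exact ((mem_orderedMatch_iff W (fst_lt_snd_of_mem_orderedMatch W h)).mp h).1
  · exact ((mem_orderedMatch_iff W (fst_lt_snd_of_mem_orderedMatch W h)).mp h).2

lemma notMem_partners_orderedMatch_self (d : Fin N) : d ∉ partners (orderedMatch W) d := by
  intro h
  rcases mem_partners.mp h with h | h <;> exact lt_irrefl d (fst_lt_snd_of_mem_orderedMatch W h)

lemma weak_nbhd_orderedMatch_of_subset (hW : TotalPreorderOn W) (hTop : TopAgentLabeled W)
    {d : Fin N} {B : Finset (Fin N)} (hB : B ⊆ nbhd (orderedMatch W) d) (hdB : d ∈ B) :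
    W d (nbhd (orderedMatch W) d) B :=
  (acceptedInOrder_partners_orderedMatch d).weak_of_subset hW hTop
    (notMem_partners_orderedMatch_self d) B hB hdB

theorem accepts_of_weak_deviation (hW : TotalPreorderOn W) (hTop : TopAgentLabeled W)
    (hLC : LimitedComp W) {d o : Fin N} {E' : Finset (Fin N × Fin N)}
    (hdev : W d (nbhd E' d) (nbhd (orderedMatch W) d)) (ho : o ∈ partners E' d) (hod : o ≠ d)
    (hlow : ∀ c ∈ partners E' d, c ≠ d → c < o → c ∈ partners (orderedMatch W) d) :
    W d (insert o (nbhdBelow (orderedMatch W) d o)) (nbhdBelow (orderedMatch W) d o) := by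
  set Q := nbhdBelow (orderedMatch W) d o
  have hdQ : d ∈ Q := mem_insert_self _ _
  by_contra hrej
  have hrej' : SPref W d Q (insert o Q) :=
    ⟨((hW d).1 _ _ hdQ (mem_insert_of_mem hdQ)).resolve_right hrej, hrej⟩
  have hQ : ∀ B ⊆ Q, d ∈ B → W d Q B :=
    ((acceptedInOrder_partners_orderedMatch d).filter_lt o).weak_of_subset hW hTop
      fun h => notMem_partners_orderedMatch_self d (mem_filter.mp h).1
  have hQo : ∀ c ∈ Q, c ≠ d → c < o := fun c hc hcd =>
    (mem_filter.mp ((mem_insert.mp hc).resolve_left hcd)).2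
  have hBlow : ∀ c ∈ nbhd E' d, c < o → c ∈ Q := by
    intro c hc hco
    rcases mem_insert.mp hc with rfl | hc
    · exact hdQ
    by_cases hcd : c = d
    · exact hcd ▸ hdQ
    exact mem_insert_of_mem (mem_filter.mpr ⟨hlow c hc hcd hco, hco⟩)
  have hoQ : o ∉ Q := fun h => lt_irrefl o (hQo o h hod)
  have hgain := sPref_of_rejected hW hTop hLC hdQ hQo hQ hrej' (mem_insert_self d _) hBlow
    fun h => hoQ (h (mem_insert_of_mem ho))
  have hQsub : Q ⊆ nbhd (orderedMatch W) d := insert_subset_insert d (filter_subset _ _)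
  exact hgain.2 (hW.trans hdev (weak_nbhd_orderedMatch_of_subset hW hTop hQsub hdQ))

theorem mem_partners_orderedMatch_of_blocks (hW : TotalPreorderOn W)
    (hTop : TopAgentLabeled W) (hLC : LimitedComp W) {C : Finset (Fin N)}
    {E' : Finset (Fin N × Fin N)} (hblock : Blocks W (orderedMatch W) C E') {a b : Fin N}
    (hab : a < b) (hE' : b ∈ partners E' a) : b ∈ partners (orderedMatch W) a := by
  obtain ⟨hnew, -, hweak, -⟩ := hblock
  set E := orderedMatch W
  by_contra hbad
  -- a new link that comes first in the order in which ordered match processes pairs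
  let bad := univ.filter fun p : Fin N × Fin N =>
    p.1 < p.2 ∧ p.2 ∈ partners E' p.1 ∧ p.2 ∉ partners E p.1
  obtain ⟨⟨x, y⟩, hxy, hmin⟩ :=
    bad.exists_min_image toLex ⟨(a, b), by simp [bad, hab, hE', hbad]⟩
  simp only [bad, mem_filter, mem_univ, true_and] at hxy
  obtain ⟨hxy, hE'xy, hExy⟩ := hxy
  have hold : ∀ u v, u < v → toLex (u, v) < toLex (x, y) → v ∈ partners E' u →
      v ∈ partners E u := by
    intro u v huv hlt hv
    by_contra h
    exact (hmin (u, v) (by simp [bad, huv, hv, h])).not_gt hlt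
  have hC : x ∈ C ∧ y ∈ C := by
    rcases mem_partners.mp hE'xy with h | h
    · exact hnew _ h fun h' => hExy (mem_partners.mpr (Or.inl h'))
    · exact (hnew _ h fun h' => hExy (mem_partners.mpr (Or.inr h'))).symm
  refine hExy (mem_partners.mpr (Or.inl ((mem_orderedMatch_iff W hxy).mpr ⟨?_, ?_⟩)))
  · refine accepts_of_weak_deviation hW hTop hLC (hweak x hC.1) hE'xy hxy.ne' ?_
    intro c hc hcx hcy
    rcases lt_or_gt_of_ne hcx with h | h
    · exact mem_partners_comm.mpr
        (hold c x h (Prod.Lex.toLex_lt_toLex.mpr (Or.inl h)) (mem_partners_comm.mp hc))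
    · exact hold x c h (Prod.Lex.toLex_lt_toLex.mpr (Or.inr ⟨rfl, hcy⟩)) hc
  · refine accepts_of_weak_deviation hW hTop hLC (hweak y hC.2) (mem_partners_comm.mp hE'xy)
      hxy.ne ?_
    intro c hc _ hcx
    exact mem_partners_comm.mpr (hold c y (hcx.trans hxy)
      (Prod.Lex.toLex_lt_toLex.mpr (Or.inl hcx)) (mem_partners_comm.mp hc))

lemma nbhd_subset_of_blocks (hW : TotalPreorderOn W) (hTop : TopAgentLabeled W)
    (hLC : LimitedComp W) {C : Finset (Fin N)} {E' : Finset (Fin N × Fin N)}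
    (hblock : Blocks W (orderedMatch W) C E') (d : Fin N) :
    nbhd E' d ⊆ nbhd (orderedMatch W) d := by
  intro c hc
  rcases eq_or_ne c d with rfl | hcd
  · exact mem_insert_self c _
  refine mem_insert_of_mem ?_
  replace hc := (mem_insert.mp hc).resolve_left hcd
  rcases hcd.lt_or_gt with h | h
  · exact mem_partners_comm.mpr
      (mem_partners_orderedMatch_of_blocks hW hTop hLC hblock h (mem_partners_comm.mp hc))
  · exact mem_partners_orderedMatch_of_blocks hW hTop hLC hblock h hc

end Stability

end OrderedMatch

/-- under the top agent property and limited complementarity, the outcome of the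
ordered match algorithm is a strongly stable outcome of the network formation game. -/
theorem stmt2 {N : ℕ} (W : Fin N → Finset (Fin N) → Finset (Fin N) → Prop)
    (hW : TotalPreorderOn W) (hTop : TopAgentLabeled W) (hLC : LimitedComp W) :
    StronglyStable W (orderedMatch W) := by
  rintro ⟨C, E', -, hblock⟩
  obtain ⟨m, -, hm⟩ := hblock.2.2.2
  exact hm.2 (weak_nbhd_orderedMatch_of_subset hW hTop
    (nbhd_subset_of_blocks hW hTop hLC hblock m) (mem_insert_self m _))
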